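/- arXiv:1801.02367 — 3 statements merged into one kernel-verified Lean document; each statement's English description precedes it below -/
import Mathlib

section
/- Let φ be a flat ADT formula in negation normal form over a well-defined ADT, and let φ̃ be its reduct obtained by exhaustively applying the reduction rules (1)–(6) at positive positions and conjoining the range constraints In_σ(x̃) for all variables x : σ of φ. Then φ̃ is satisfiable over EUF+LIA (uninterpreted integer functions together with linear integer arithmetic) if and only if φ is satisfiable over the ADT. -/
/-!
Reduction of ADT constraints to EUF+LIA:
soundness and completeness of the reduction (Theorem 1 of the paper).
-/

/-- An ADT signature: sorts `σ₁,…,σ_k` (modelled as `Fin numSorts`) and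
constructors `f₁,…,f_m` (modelled as `Fin numCtors`), each constructor having
a list of argument sorts and a result sort. -/
structure ADTSig where
  numSorts : ℕ
  numCtors : ℕ
  ctorArgs : Fin numCtors → List (Fin numSorts)
  ctorRes : Fin numCtors → Fin numSorts

namespace ADTSig

/-- Constructor terms of a given sort. -/
inductive Term (S : ADTSig) : Fin S.numSorts → Type where
  | mk (f : Fin S.numCtors)
      (args : (i : Fin (S.ctorArgs f).length) → Term S ((S.ctorArgs f).get i)) :
      Term S (S.ctorRes f)

/-- The head constructor of a constructor term. -/
def Term.head {S : ADTSig} : {σ : Fin S.numSorts} → Term S σ → Fin S.numCtors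
  | _, .mk f _ => f

/-- An ADT is well-defined if every sort has at least one constructor term. -/
def WellDefined (S : ADTSig) : Prop := ∀ σ, Nonempty (S.Term σ)

/-- An interpretation of the selectors: total functions that invert the
constructors on terms with matching head symbol. -/
structure SelInterp (S : ADTSig) where
  sel : (f : Fin S.numCtors) → (i : Fin (S.ctorArgs f).length) →
    S.Term (S.ctorRes f) → S.Term ((S.ctorArgs f).get i)
  sel_mk : ∀ f i args, sel f i (Term.mk f args) = args i

/-- Literals of flat ADT formulas (negation normal form: negation is pushed
into the literals): constructor equations `f(x₁,…,x_n) ≈ x₀`, selector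
equations `f^j(x) ≈ y`, positive and negative testers, and (dis)equations
between variables.  `V σ` is the set of variables of sort `σ`. -/
inductive Lit (S : ADTSig) (V : Fin S.numSorts → Type) where
  | ctorEq (f : Fin S.numCtors)
      (xs : (i : Fin (S.ctorArgs f).length) → V ((S.ctorArgs f).get i))
      (x0 : V (S.ctorRes f))
  | selEq (f : Fin S.numCtors) (j : Fin (S.ctorArgs f).length)
      (x : V (S.ctorRes f)) (y : V ((S.ctorArgs f).get j))
  | tst (f : Fin S.numCtors) (x : V (S.ctorRes f))
  | ntst (f : Fin S.numCtors) (x : V (S.ctorRes f))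
  | eqv {σ : Fin S.numSorts} (x y : V σ)
  | nev {σ : Fin S.numSorts} (x y : V σ)

/-- Flat formulas in negation normal form. -/
inductive Formula (S : ADTSig) (V : Fin S.numSorts → Type) where
  | fls
  | lit (l : Lit S V)
  | and (φ ψ : Formula S V)
  | or (φ ψ : Formula S V)

variable {S : ADTSig} {V : Fin S.numSorts → Type}

/-- ADT semantics of literals, given a selector interpretation `I` and a
variable assignment `β` into the constructor terms. -/
def Lit.holds (I : SelInterp S) (β : (σ : Fin S.numSorts) → V σ → S.Term σ) :
    Lit S V → Prop
  | .ctorEq f xs x0 => Term.mk f (fun i => β _ (xs i)) = β _ x0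
  | .selEq f j x y => I.sel f j (β _ x) = β _ y
  | .tst f x => (β _ x).head = f
  | .ntst f x => (β _ x).head ≠ f
  | .eqv x y => β _ x = β _ y
  | .nev x y => β _ x ≠ β _ y

def Formula.holds (I : SelInterp S) (β : (σ : Fin S.numSorts) → V σ → S.Term σ) :
    Formula S V → Prop
  | .fls => False
  | .lit l => l.holds I β
  | .and φ ψ => φ.holds I β ∧ ψ.holds I β
  | .or φ ψ => φ.holds I β ∨ ψ.holds I β

/-- Satisfiability of an ADT formula over the term structure `(𝕋, I)`. -/
def Formula.ADTSat (φ : Formula S V) : Prop :=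
  ∃ (I : SelInterp S) (β : (σ : Fin S.numSorts) → V σ → S.Term σ), φ.holds I β

/-! ### The EUF+LIA side -/

/-- An EUF+LIA model for the target vocabulary of the reduction: uninterpreted
functions `f̃ : ℤⁿ → ℤ` for the constructors, `f̃^j : ℤ → ℤ` for the selectors,
and `ctorId_σ, depth_σ : ℤ → ℤ` for every sort. -/
structure RModel (S : ADTSig) where
  ctorF : (f : Fin S.numCtors) → (Fin (S.ctorArgs f).length → ℤ) → ℤ
  selF : (f : Fin S.numCtors) → Fin (S.ctorArgs f).length → ℤ → ℤ
  ctorIdF : Fin S.numSorts → ℤ → ℤ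
  depthF : Fin S.numSorts → ℤ → ℤ

/-- The unique index `Id_f` of a constructor among the constructors of its
result sort. -/
def ctorIdx' (S : ADTSig) (f : Fin S.numCtors) : ℤ :=
  ((Finset.univ.filter
      (fun g : Fin S.numCtors => g ≤ f ∧ S.ctorRes g = S.ctorRes f)).card : ℤ)

/-- The range constraint `In_σ(x)`: `0 ≤ x < |𝕋_σ|` if `𝕋_σ` is finite,
and `true` otherwise. -/
def InSort (S : ADTSig) (σ : Fin S.numSorts) (x : ℤ) : Prop :=
  Finite (S.Term σ) → (0 ≤ x ∧ x < (Nat.card (S.Term σ) : ℤ))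

/-- `CtorSpec_f(x₀,…,x_n)`. -/
def CtorSpec (M : RModel S) (f : Fin S.numCtors) (x0 : ℤ)
    (xs : Fin (S.ctorArgs f).length → ℤ) : Prop :=
  M.ctorF f xs = x0 ∧
  M.ctorIdF (S.ctorRes f) x0 = ctorIdx' S f ∧
  ∀ j, M.selF f j x0 = xs j ∧
    M.depthF ((S.ctorArgs f).get j) (xs j) < M.depthF (S.ctorRes f) x0

/-- `ExCtorSpec_f(x)`. -/
def ExCtorSpec (M : RModel S) (f : Fin S.numCtors) (x : ℤ) : Prop :=
  ∃ xs : Fin (S.ctorArgs f).length → ℤ,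
    (∀ j, InSort S ((S.ctorArgs f).get j) (xs j)) ∧ CtorSpec M f x xs

/-- The reduct of a literal: reduction rules (1)–(6) of the paper. -/
def Lit.redHolds (M : RModel S) (β : (σ : Fin S.numSorts) → V σ → ℤ) :
    Lit S V → Prop
  | .ctorEq f xs x0 => CtorSpec M f (β _ x0) (fun i => β _ (xs i))
  | .selEq f j x y => M.selF f j (β _ x) = β _ y ∧
      ∃ g, S.ctorRes g = S.ctorRes f ∧ ExCtorSpec M g (β _ x)
  | .tst f x => ExCtorSpec M f (β _ x)
  | .ntst f x => ∃ g, S.ctorRes g = S.ctorRes f ∧ g ≠ f ∧ ExCtorSpec M g (β _ x)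
  | .eqv x y => β _ x = β _ y
  | .nev x y => β _ x ≠ β _ y

def Formula.redHolds (M : RModel S) (β : (σ : Fin S.numSorts) → V σ → ℤ) :
    Formula S V → Prop
  | .fls => False
  | .lit l => l.redHolds M β
  | .and φ ψ => φ.redHolds M β ∧ ψ.redHolds M β
  | .or φ ψ => φ.redHolds M β ∨ ψ.redHolds M β

/-- Satisfiability (over EUF+LIA) of the reduct `φ̃` of `φ`: the rewritten
formula `φ*` conjoined with the range constraints `In_σ(x̃)` for the
variables. -/
def Formula.RedSat (φ : Formula S V) : Prop :=
  ∃ (M : RModel S) (β : (σ : Fin S.numSorts) → V σ → ℤ),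
    φ.redHolds M β ∧ ∀ σ (x : V σ), InSort S σ (β σ x)

end ADTSig

/-!
Completeness: constructor terms are encoded injectively as integers, the terms of a finite sort
onto `[0, |𝕋_σ|)`; reading constructors, selectors, `ctorId` and `depth` off the decoded terms
gives a model of the reduct.

Soundness: from a model of the reduct we build maps `T : ℤ → 𝕋_σ`, injective on the range of
every sort, sending each value `v` with `ExCtorSpec_f(v)` to `f(T(f¹(v)), …, T(fⁿ(v)))`. On the
finite sorts, by induction on the maximal depth of their terms, the constructor values are mapped
injectively because their arguments are, and this map extends to a bijection between
`[0, |𝕋_σ|)` and `𝕋_σ`. On the infinite sorts this is needed only at the finitely many values of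
the variables: these are realized by recursion along `depth_σ`, and every other value is sent to
a leaf, a deep term whose depth is far from that of every other leaf. A realized term lies at
most as many levels above a finite-sort term or a leaf as there are variables, so it is never a
leaf, and injectivity follows. Selectors are then interpreted by transport through `T`.
-/

namespace Set

theorem InjOn.exists_extension {α β : Type*} [Nonempty β] {u : α → β} {A W : Set α}
    (hu : InjOn u A) (hAW : A ⊆ W) (hW : W.Finite) (hcard : W.encard ≤ (univ : Set β).encard) :
    ∃ g : α → β, InjOn g W ∧ EqOn g u A := by
  classical
  have hA : A.encard ≠ ⊤ := (hW.subset hAW).encard_lt_top.ne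
  have hle : (W \ A).encard ≤ (u '' A)ᶜ.encard := by
    rw [← ENat.add_le_add_iff_right hA, encard_sdiff_add_encard_of_subset hAW,
      ← hu.encard_image, add_comm, encard_add_encard_compl]
    exact hcard
  obtain ⟨e, heA, he⟩ := hW.sdiff.exists_injOn_of_encard_le hle
  refine ⟨A.piecewise u e, ?_, piecewise_eqOn _ _ _⟩
  rw [← union_sdiff_cancel hAW, injOn_union disjoint_sdiff_right]
  refine ⟨hu.congr (piecewise_eqOn _ _ _).symm, he.congr ((piecewise_eqOn_compl _ _ _).mono
    fun _ h => h.2).symm, fun x hx y hy hxy => heA hy ⟨x, hx, ?_⟩⟩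
  rwa [piecewise_eq_of_mem _ _ _ hx, piecewise_eq_of_notMem _ _ _ hy.2] at hxy

end Set

namespace ADTSig

variable {S : ADTSig} {V : Fin S.numSorts → Type}

/-! ### Constructor terms -/

namespace Term

@[simp] theorem head_mk (f : Fin S.numCtors)
    (args : (i : Fin (S.ctorArgs f).length) → Term S ((S.ctorArgs f).get i)) :
    (mk f args).head = f := rfl

noncomputable def depth {σ : Fin S.numSorts} : Term S σ → ℕ
  | mk _ args => (Finset.univ.sup fun i => (args i).depth) + 1

theorem depth_mk (f : Fin S.numCtors)
    (args : (i : Fin (S.ctorArgs f).length) → Term S ((S.ctorArgs f).get i)) :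
    (mk f args).depth = (Finset.univ.sup fun i => (args i).depth) + 1 := by
  rw [depth]

theorem depth_lt_depth_mk (f : Fin S.numCtors)
    (args : (i : Fin (S.ctorArgs f).length) → Term S ((S.ctorArgs f).get i))
    (j : Fin (S.ctorArgs f).length) : (args j).depth < (mk f args).depth := by
  rw [depth_mk]
  exact Nat.lt_succ_of_le (Finset.le_sup (f := fun i => (args i).depth) (Finset.mem_univ j))

theorem finite_setOf_sigma_depth_le (n : ℕ) :
    {p : Σ σ, Term S σ | p.2.depth ≤ n}.Finite := by
  induction n with
  | zero =>
    convert Set.finite_empty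
    ext ⟨σ, ⟨f, args⟩⟩
    simp [depth_mk]
  | succ n ih =>
    have : ∀ σ, Finite {t : Term S σ // t.depth ≤ n} := fun σ =>
      (ih.preimage sigma_mk_injective.injOn).to_subtype
    refine (Set.finite_range fun x : Σ f, ∀ i, {t : Term S ((S.ctorArgs f).get i) // t.depth ≤ n} =>
      (⟨_, mk x.1 fun i => (x.2 i).1⟩ : Σ σ, Term S σ)).subset ?_
    rintro ⟨σ, ⟨f, args⟩⟩ h
    have h' : ∀ i, (args i).depth ≤ n := by
      simpa [depth_mk, Finset.sup_le_iff] using h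
    exact ⟨⟨f, fun i => ⟨args i, h' i⟩⟩, rfl⟩

theorem finite_setOf_depth_le (σ : Fin S.numSorts) (n : ℕ) :
    {t : Term S σ | t.depth ≤ n}.Finite :=
  (finite_setOf_sigma_depth_le n).preimage sigma_mk_injective.injOn

instance (σ : Fin S.numSorts) : Countable (Term S σ) := by
  rw [← Set.countable_univ_iff, show Set.univ = ⋃ n, {t : Term S σ | t.depth ≤ n} from
    (Set.iUnion_eq_univ_iff.2 fun t => ⟨t.depth, Set.mem_ofPred.2 le_rfl⟩).symm]
  exact Set.countable_iUnion fun n => (finite_setOf_depth_le σ n).countable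

theorem exists_lt_depth {σ : Fin S.numSorts} [Infinite (Term S σ)] (b : ℕ) :
    ∃ t : Term S σ, b < t.depth := by
  by_contra! h
  exact Set.infinite_univ (α := Term S σ) ((finite_setOf_depth_le σ b).subset fun t _ => h t)

end Term

theorem finite_term_ctorArgs (hS : S.WellDefined) {f : Fin S.numCtors}
    [Finite (Term S (S.ctorRes f))] (j : Fin (S.ctorArgs f).length) :
    Finite (Term S ((S.ctorArgs f).get j)) :=
  Finite.of_injective (fun t => Term.mk f (Function.update (fun i => (hS _).some) j t))
    fun a b h => by simpa using congrFun (Term.mk.inj h) j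

noncomputable def maxDepth (S : ADTSig) (σ : Fin S.numSorts) : ℕ :=
  sSup (Set.range (Term.depth : Term S σ → ℕ))

theorem depth_le_maxDepth {σ : Fin S.numSorts} [Finite (Term S σ)] (t : Term S σ) :
    t.depth ≤ S.maxDepth σ :=
  le_csSup (Set.finite_range _).bddAbove ⟨t, rfl⟩

theorem maxDepth_ctorArgs_lt (hS : S.WellDefined) {f : Fin S.numCtors}
    [Finite (Term S (S.ctorRes f))] (j : Fin (S.ctorArgs f).length) :
    S.maxDepth ((S.ctorArgs f).get j) < S.maxDepth (S.ctorRes f) := by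
  have := finite_term_ctorArgs hS j
  obtain ⟨t, ht⟩ := Nat.sSup_mem (Set.range_nonempty_iff_nonempty.2 (hS ((S.ctorArgs f).get j)))
    (Set.finite_range (Term.depth : Term S ((S.ctorArgs f).get j) → ℕ)).bddAbove
  let args := Function.update (fun i => (hS _).some) j t
  calc S.maxDepth ((S.ctorArgs f).get j) = (args j).depth := by simp [args, ht, maxDepth]
    _ < (Term.mk f args).depth := Term.depth_lt_depth_mk f args j
    _ ≤ S.maxDepth (S.ctorRes f) := depth_le_maxDepth _

noncomputable def finiteDepthBound (S : ADTSig) : ℕ := Finset.univ.sup S.maxDepth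

theorem depth_le_finiteDepthBound {σ : Fin S.numSorts} [Finite (Term S σ)] (t : Term S σ) :
    t.depth ≤ S.finiteDepthBound :=
  (depth_le_maxDepth t).trans (Finset.le_sup (Finset.mem_univ σ))

theorem setOf_inSort_of_finite {σ : Fin S.numSorts} [Finite (Term S σ)] :
    {v | InSort S σ v} = Set.Ico 0 (Nat.card (Term S σ) : ℤ) := by
  ext v
  exact ⟨fun h => h ‹_›, fun h _ => h⟩

theorem finite_setOf_inSort {σ : Fin S.numSorts} [Finite (Term S σ)] :
    {v | InSort S σ v}.Finite := by
  rw [setOf_inSort_of_finite]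
  exact Set.finite_Ico _ _

theorem encard_setOf_inSort {σ : Fin S.numSorts} [Finite (Term S σ)] :
    {v | InSort S σ v}.encard = (Set.univ : Set (Term S σ)).encard := by
  rw [setOf_inSort_of_finite, Set.encard_univ, ENat.card_eq_coe_natCard, ← Finset.coe_Ico,
    Set.encard_coe_eq_coe_finsetCard, Int.card_Ico]
  simp

/-! ### Completeness -/

theorem exists_injective_inSort (σ : Fin S.numSorts) :
    ∃ e : Term S σ → ℤ, Function.Injective e ∧ ∀ t, InSort S σ (e t) := by
  by_cases hfin : Finite (Term S σ)
  · let e := Finite.equivFin (Term S σ)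
    refine ⟨fun t => (e t : ℕ), fun a b h => e.injective (Fin.ext (by simpa using h)),
      fun t _ => ⟨by positivity, by simp⟩⟩
  · obtain ⟨e, he⟩ := exists_injective_nat (Term S σ)
    exact ⟨fun t => (e t : ℤ), fun a b h => he (by simpa using h), fun _ h => absurd h hfin⟩

noncomputable def encodeTerm (σ : Fin S.numSorts) : Term S σ → ℤ :=
  (exists_injective_inSort σ).choose

theorem encodeTerm_injective (σ : Fin S.numSorts) : Function.Injective (encodeTerm (S := S) σ) :=
  (exists_injective_inSort σ).choose_spec.1

theorem inSort_encodeTerm {σ : Fin S.numSorts} (t : Term S σ) : InSort S σ (encodeTerm σ t) :=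
  (exists_injective_inSort σ).choose_spec.2 t

noncomputable def decodeTerm (hS : S.WellDefined) (σ : Fin S.numSorts) : ℤ → Term S σ :=
  haveI := hS σ
  Function.invFun (encodeTerm σ)

@[simp] theorem decodeTerm_encodeTerm (hS : S.WellDefined) {σ : Fin S.numSorts} (t : Term S σ) :
    decodeTerm hS σ (encodeTerm σ t) = t :=
  haveI := hS σ
  Function.leftInverse_invFun (encodeTerm_injective σ) t

noncomputable def termModel (hS : S.WellDefined) (I : SelInterp S) : RModel S where
  ctorF f xs := encodeTerm _ (Term.mk f fun i => decodeTerm hS _ (xs i))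
  selF f j x := encodeTerm _ (I.sel f j (decodeTerm hS _ x))
  ctorIdF σ x := ctorIdx' S (decodeTerm hS σ x).head
  depthF σ x := (decodeTerm hS σ x).depth

theorem ctorSpec_termModel (hS : S.WellDefined) (I : SelInterp S) (f : Fin S.numCtors)
    (args : (i : Fin (S.ctorArgs f).length) → Term S ((S.ctorArgs f).get i)) :
    CtorSpec (termModel hS I) f (encodeTerm _ (Term.mk f args))
      (fun i => encodeTerm _ (args i)) := by
  refine ⟨by simp [termModel], by simp [termModel], fun j => ⟨by simp [termModel, I.sel_mk], ?_⟩⟩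
  simpa [termModel] using Term.depth_lt_depth_mk f args j

theorem Lit.redHolds_termModel (hS : S.WellDefined) (I : SelInterp S)
    {β : (σ : Fin S.numSorts) → V σ → Term S σ} {l : Lit S V} (h : l.holds I β) :
    l.redHolds (termModel hS I) (fun σ x => encodeTerm σ (β σ x)) := by
  have hex : ∀ {σ} (t : Term S σ), ∃ g, S.ctorRes g = σ ∧ t.head = g ∧
      ExCtorSpec (termModel hS I) g (encodeTerm σ t) := by
    rintro _ ⟨f, args⟩
    exact ⟨f, rfl, rfl, _, fun _ => inSort_encodeTerm _, ctorSpec_termModel hS I f args⟩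
  cases l with
  | ctorEq f xs x0 =>
    show CtorSpec _ f (encodeTerm _ (β _ x0)) _
    rw [← show Term.mk f (fun i => β _ (xs i)) = β _ x0 from h]
    exact ctorSpec_termModel hS I f _
  | selEq f j x y =>
    obtain ⟨g, hg, -, hgx⟩ := hex (β _ x)
    exact ⟨by simp [termModel, show I.sel f j (β _ x) = β _ y from h], g, hg, hgx⟩
  | tst f x =>
    obtain ⟨g, -, hhead, hgx⟩ := hex (β _ x)
    rwa [← hhead, show (β _ x).head = f from h] at hgx
  | ntst f x =>
    obtain ⟨g, hg, hhead, hgx⟩ := hex (β _ x)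
    exact ⟨g, hg, hhead ▸ h, hgx⟩
  | eqv x y => exact congrArg _ (show β _ x = β _ y from h)
  | nev x y => exact (encodeTerm_injective _).ne (show β _ x ≠ β _ y from h)

theorem Formula.redSat_of_adtSat (hS : S.WellDefined) {φ : Formula S V} (h : φ.ADTSat) :
    φ.RedSat := by
  obtain ⟨I, β, hφ⟩ := h
  refine ⟨termModel hS I, fun σ x => encodeTerm σ (β σ x), ?_, fun σ x => inSort_encodeTerm _⟩
  induction φ with
  | fls => exact hφ
  | lit l => exact Lit.redHolds_termModel hS I hφ
  | and φ ψ ihφ ihψ => exact ⟨ihφ hφ.1, ihψ hφ.2⟩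
  | or φ ψ ihφ ihψ => exact hφ.imp ihφ ihψ

/-! ### Soundness -/

theorem ctorIdx'_lt {f g : Fin S.numCtors} (hres : S.ctorRes f = S.ctorRes g) (hlt : f < g) :
    ctorIdx' S f < ctorIdx' S g := by
  unfold ctorIdx'
  refine Nat.cast_lt.2 (Finset.card_lt_card ((Finset.ssubset_iff_of_subset fun k hk => ?_).2
    ⟨g, by simp, by simp [hlt.not_ge]⟩))
  simp only [Finset.mem_filter, Finset.mem_univ, true_and] at hk ⊢
  exact ⟨hk.1.trans hlt.le, hk.2.trans hres⟩

theorem ctorIdx'_injOn (σ : Fin S.numSorts) : Set.InjOn (ctorIdx' S) {f | S.ctorRes f = σ} :=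
  StrictMonoOn.injOn fun _ hf _ hg hlt => ctorIdx'_lt (hf.trans hg.symm) hlt

namespace ExCtorSpec

variable {M : RModel S} {f g : Fin S.numCtors} {v w : ℤ}

theorem ctor_eq (hres : S.ctorRes f = S.ctorRes g) (hf : ExCtorSpec M f v)
    (hg : ExCtorSpec M g v) : f = g := by
  obtain ⟨-, -, -, hf, -⟩ := hf
  obtain ⟨-, -, -, hg, -⟩ := hg
  exact ctorIdx'_injOn _ hres rfl (by rw [← hf, hres, hg])

theorem inSort_selF (h : ExCtorSpec M f v) (j : Fin (S.ctorArgs f).length) :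
    InSort S ((S.ctorArgs f).get j) (M.selF f j v) := by
  obtain ⟨xs, hxs, -, -, hsel⟩ := h
  rw [(hsel j).1]
  exact hxs j

theorem depthF_selF_lt (h : ExCtorSpec M f v) (j : Fin (S.ctorArgs f).length) :
    M.depthF ((S.ctorArgs f).get j) (M.selF f j v) < M.depthF (S.ctorRes f) v := by
  obtain ⟨xs, -, -, -, hsel⟩ := h
  rw [(hsel j).1]
  exact (hsel j).2

theorem eq_of_selF_eq (hv : ExCtorSpec M f v) (hw : ExCtorSpec M f w)
    (h : ∀ j, M.selF f j v = M.selF f j w) : v = w := by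
  obtain ⟨xs, -, rfl, -, hxs⟩ := hv
  obtain ⟨ys, -, rfl, -, hys⟩ := hw
  congr 1
  funext j
  rw [← (hxs j).1, ← (hys j).1, h j]

end ExCtorSpec

def IsCtorValue (M : RModel S) (σ : Fin S.numSorts) (v : ℤ) : Prop :=
  ∃ f, S.ctorRes f = σ ∧ ExCtorSpec M f v

/-- The term `f(T(f¹(v)), …, T(fⁿ(v)))` for the constructor `f` that the model assigns to `v`. -/
noncomputable def ctorTerm (hS : S.WellDefined) (M : RModel S) (T : ∀ σ, ℤ → Term S σ)
    (σ : Fin S.numSorts) (v : ℤ) : Term S σ :=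
  haveI := Classical.dec (IsCtorValue M σ v)
  if h : IsCtorValue M σ v then
    h.choose_spec.1 ▸ Term.mk h.choose fun j => T _ (M.selF h.choose j v)
  else (hS σ).some

section CtorTerm

variable (hS : S.WellDefined) {M : RModel S} (T : ∀ σ, ℤ → Term S σ) {f : Fin S.numCtors}
  {σ : Fin S.numSorts} {v : ℤ}

theorem ctorTerm_eq (hres : S.ctorRes f = σ) (hv : ExCtorSpec M f v) :
    ctorTerm hS M T σ v = hres ▸ Term.mk f fun j => T _ (M.selF f j v) := by
  have h : IsCtorValue M σ v := ⟨f, hres, hv⟩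
  rw [ctorTerm, dif_pos h]
  obtain rfl := h.choose_spec.2.ctor_eq (h.choose_spec.1.trans hres.symm) hv
  rfl

theorem ctorTerm_ctorRes (hv : ExCtorSpec M f v) :
    ctorTerm hS M T (S.ctorRes f) v = Term.mk f fun j => T _ (M.selF f j v) :=
  ctorTerm_eq hS T rfl hv

theorem head_ctorTerm (hres : S.ctorRes f = σ) (hv : ExCtorSpec M f v) :
    (ctorTerm hS M T σ v).head = f := by
  subst hres
  rw [ctorTerm_ctorRes hS T hv, Term.head_mk]

theorem ctorTerm_injOn
    (hT : ∀ f, S.ctorRes f = σ → ∀ j,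
      Set.InjOn (T ((S.ctorArgs f).get j)) {v | InSort S ((S.ctorArgs f).get j) v}) :
    Set.InjOn (ctorTerm hS M T σ) {v | IsCtorValue M σ v} := by
  rintro v ⟨f, rfl, hv⟩ w ⟨g, hg, hw⟩ h
  obtain rfl : f = g := by
    simpa [head_ctorTerm hS T rfl hv, head_ctorTerm hS T hg hw] using congrArg Term.head h
  rw [ctorTerm_ctorRes hS T hv, ctorTerm_ctorRes hS T hw] at h
  exact hv.eq_of_selF_eq hw fun j => hT f rfl j (hv.inSort_selF j) (hw.inSort_selF j)
    (congrFun (Term.mk.inj h) j)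

end CtorTerm

def Realizes (M : RModel S) (T : ∀ σ, ℤ → Term S σ) (A : Set (Fin S.numSorts × ℤ)) : Prop :=
  ∀ f v, (S.ctorRes f, v) ∈ A → ExCtorSpec M f v →
    T _ v = Term.mk f fun j => T _ (M.selF f j v)

theorem Realizes.head_eq {M : RModel S} {T : ∀ σ, ℤ → Term S σ} {A : Set (Fin S.numSorts × ℤ)}
    (hT : Realizes M T A) {f : Fin S.numCtors} {σ : Fin S.numSorts} {v : ℤ}
    (hres : S.ctorRes f = σ) (hA : (σ, v) ∈ A) (hv : ExCtorSpec M f v) : (T σ v).head = f := by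
  subst hres
  rw [hT f v hA hv, Term.head_mk]

def RealizesBelow (M : RModel S) (T : ∀ σ, ℤ → Term S σ) (n : ℕ) : Prop :=
  (∀ σ, Finite (Term S σ) → S.maxDepth σ < n → Set.InjOn (T σ) {v | InSort S σ v}) ∧
    Realizes M T {p | Finite (Term S p.1) ∧ S.maxDepth p.1 < n ∧ InSort S p.1 p.2}

theorem RealizesBelow.exists_succ (hS : S.WellDefined) {M : RModel S} {T : ∀ σ, ℤ → Term S σ}
    {n : ℕ} (hT : RealizesBelow M T n) :
    ∃ T', RealizesBelow M T' (n + 1) := by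
  have hlevel : ∀ σ, ∃ g : ℤ → Term S σ,
      (Finite (Term S σ) → S.maxDepth σ = n → Set.InjOn g {v | InSort S σ v} ∧
        Set.EqOn g (ctorTerm hS M T σ) {v | InSort S σ v ∧ IsCtorValue M σ v}) ∧
      (S.maxDepth σ ≠ n → g = T σ) := by
    intro σ
    by_cases hσ : Finite (Term S σ) ∧ S.maxDepth σ = n
    · obtain ⟨hfin, hσ⟩ := hσ
      have := hS σ
      have hinj : Set.InjOn (ctorTerm hS M T σ) {v | InSort S σ v ∧ IsCtorValue M σ v} := by
        refine (ctorTerm_injOn hS T fun f hf j => hT.1 _ ?_ ?_).mono fun _ hv => hv.2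
        · subst hf; exact finite_term_ctorArgs hS j
        · subst hf; exact hσ ▸ maxDepth_ctorArgs_lt hS j
      obtain ⟨g, hg⟩ := hinj.exists_extension (fun _ hv => hv.1)
        finite_setOf_inSort encard_setOf_inSort.le
      exact ⟨g, fun _ _ => hg, fun h => absurd hσ h⟩
    · exact ⟨T σ, fun hfin h => absurd ⟨hfin, h⟩ hσ, fun _ => rfl⟩
  choose T' hT' using hlevel
  have hlow : ∀ τ, S.maxDepth τ < n → T' τ = T τ := fun τ h => (hT' τ).2 h.ne
  refine ⟨T', fun σ hfin hσ => ?_, fun f v ⟨hfin, hf, hv⟩ hex => ?_⟩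
  · rcases Nat.lt_succ_iff_lt_or_eq.1 hσ with hσ | hσ
    · exact hlow σ hσ ▸ hT.1 σ hfin hσ
    · exact ((hT' σ).1 hfin hσ).1
  · have hargs : ∀ j, T' _ (M.selF f j v) = T _ (M.selF f j v) := fun j => by
      rw [hlow _ ((maxDepth_ctorArgs_lt hS j).trans_le (Nat.lt_succ_iff.1 hf))]
    simp only [hargs]
    rcases Nat.lt_succ_iff_lt_or_eq.1 hf with hf | hf
    · rw [hlow _ hf]
      exact hT.2 f v ⟨hfin, hf, hv⟩ hex
    · rw [((hT' _).1 hfin hf).2 ⟨hv, f, rfl, hex⟩, ctorTerm_ctorRes hS T hex]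

theorem exists_realizes_finite (hS : S.WellDefined) (M : RModel S) :
    ∃ T : ∀ σ, ℤ → Term S σ,
      (∀ σ, Finite (Term S σ) → Set.InjOn (T σ) {v | InSort S σ v}) ∧
        Realizes M T {p | Finite (Term S p.1) ∧ InSort S p.1 p.2} := by
  have hbelow : ∀ n, ∃ T, RealizesBelow M T n := fun n => by
    induction n with
    | zero => exact ⟨fun σ _ => (hS σ).some, fun _ _ h => absurd h (Nat.not_lt_zero _),
        fun _ _ h => absurd h.2.1 (Nat.not_lt_zero _)⟩
    | succ n ih => exact ih.elim fun T hT => hT.exists_succ hS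
  obtain ⟨T, hinj, hreal⟩ := hbelow (S.finiteDepthBound + 1)
  have hσ : ∀ σ, S.maxDepth σ < S.finiteDepthBound + 1 :=
    fun σ => Nat.lt_succ_of_le (Finset.le_sup (Finset.mem_univ σ))
  exact ⟨T, fun σ hfin => hinj σ hfin (hσ σ), fun f v hv => hreal f v ⟨hv.1, hσ _, hv.2⟩⟩

section Leaves

variable (hS : S.WellDefined)

noncomputable def deepTerm (σ : Fin S.numSorts) (b : ℕ) : Term S σ :=
  haveI := hS σ
  Classical.epsilon fun t : Term S σ => b < t.depth

theorem lt_depth_deepTerm {σ : Fin S.numSorts} [Infinite (Term S σ)] (b : ℕ) :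
    b < (deepTerm hS σ b).depth :=
  Classical.epsilon_spec (Term.exists_lt_depth b)

/-- Past `leafLevel K D k` there is room for a deep term of each sort followed by a gap of `K`. -/
noncomputable def leafLevel (K D : ℕ) : ℕ → ℕ
  | 0 => D
  | k + 1 => leafLevel K D k + K + 1 +
      Finset.univ.sup fun τ => (deepTerm hS τ (leafLevel K D k)).depth

theorem leafLevel_mono (K D : ℕ) : Monotone (leafLevel hS K D) :=
  monotone_nat_of_le_succ fun k => by rw [leafLevel]; omega

noncomputable def leafTerm (K D : ℕ) (σ : Fin S.numSorts) (v : ℤ) : Term S σ :=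
  deepTerm hS σ (leafLevel hS K D (Encodable.encode (σ, v)))

variable {K D : ℕ}

theorem lt_depth_leafTerm {σ : Fin S.numSorts} [Infinite (Term S σ)] (v : ℤ) :
    D < (leafTerm hS K D σ v).depth :=
  (leafLevel_mono hS K D (Nat.zero_le _)).trans_lt (lt_depth_deepTerm hS _)

theorem depth_leafTerm_add_lt {σ τ : Fin S.numSorts} [Infinite (Term S τ)] {v w : ℤ}
    (h : Encodable.encode (σ, v) < Encodable.encode (τ, w)) :
    (leafTerm hS K D σ v).depth + K < (leafTerm hS K D τ w).depth :=
  calc (leafTerm hS K D σ v).depth + K < leafLevel hS K D (Encodable.encode (σ, v) + 1) := by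
        have := Finset.le_sup (f := fun τ => (deepTerm hS τ (leafLevel hS K D
          (Encodable.encode (σ, v)))).depth) (Finset.mem_univ σ)
        rw [leafLevel, leafTerm]
        omega
    _ ≤ leafLevel hS K D (Encodable.encode (τ, w)) := leafLevel_mono hS K D h
    _ < _ := lt_depth_deepTerm hS _

theorem depth_leafTerm_spaced {σ τ : Fin S.numSorts} [Infinite (Term S σ)] [Infinite (Term S τ)]
    {v w : ℤ} (h : (σ, v) ≠ (τ, w)) :
    (leafTerm hS K D σ v).depth + K < (leafTerm hS K D τ w).depth ∨
      (leafTerm hS K D τ w).depth + K < (leafTerm hS K D σ v).depth :=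
  (lt_or_gt_of_ne (Encodable.encode_injective.ne h)).imp (depth_leafTerm_add_lt hS)
    (depth_leafTerm_add_lt hS)

end Leaves

section Realize

variable (hS : S.WellDefined) (M : RModel S) (T₀ : ∀ σ, ℤ → Term S σ)
  (R : Finset (Fin S.numSorts × ℤ))

def ctorNodes : Set (Fin S.numSorts × ℤ) :=
  {p | p ∈ R ∧ Infinite (Term S p.1) ∧ IsCtorValue M p.1 p.2}

noncomputable def rank (p : Fin S.numSorts × ℤ) : ℕ :=
  (ctorNodes M R ∩ {q | M.depthF q.1 q.2 < M.depthF p.1 p.2}).ncard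

variable {M R} in
theorem rank_lt {p q : Fin S.numSorts × ℤ} (hq : q ∈ ctorNodes M R)
    (h : M.depthF q.1 q.2 < M.depthF p.1 p.2) : rank M R q < rank M R p :=
  Set.ncard_lt_ncard
    ⟨fun _ hr => ⟨hr.1, hr.2.trans h⟩, fun hsub => lt_irrefl (M.depthF q.1 q.2) (hsub ⟨hq, h⟩).2⟩
    ((R.finite_toSet.subset fun _ hr => hr.1).inter_of_left _)

theorem rank_lt_card_add_one (p : Fin S.numSorts × ℤ) : rank M R p < R.card + 1 :=
  Nat.lt_succ_of_le ((Set.ncard_le_ncard (Set.inter_subset_left.trans fun _ hr => hr.1)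
    R.finite_toSet).trans (Set.ncard_coe_finset R).le)

/-- The gap `R.card + 1` exceeds every rank, and leaves lie more than that gap above all terms of
finite sorts. -/
noncomputable def leaf (σ : Fin S.numSorts) (v : ℤ) : Term S σ :=
  leafTerm hS (R.card + 1) (S.finiteDepthBound + (R.card + 1)) σ v

theorem lt_depth_leaf {σ : Fin S.numSorts} [Infinite (Term S σ)] (v : ℤ) :
    S.finiteDepthBound + (R.card + 1) < (leaf hS R σ v).depth :=
  lt_depth_leafTerm hS v

theorem depth_leaf_spaced {σ τ : Fin S.numSorts} [Infinite (Term S σ)] [Infinite (Term S τ)]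
    {v w : ℤ} (h : (σ, v) ≠ (τ, w)) :
    (leaf hS R σ v).depth + (R.card + 1) < (leaf hS R τ w).depth ∨
      (leaf hS R τ w).depth + (R.card + 1) < (leaf hS R σ v).depth :=
  depth_leafTerm_spaced hS h

theorem leaf_inj {σ : Fin S.numSorts} [Infinite (Term S σ)] {v w : ℤ}
    (h : leaf hS R σ v = leaf hS R σ w) : v = w := by
  by_contra hne
  have := congrArg Term.depth h
  rcases depth_leaf_spaced hS R (σ := σ) (τ := σ) (fun h => hne (Prod.mk.inj h).2) with h | h <;>
    omega

open Classical in
noncomputable def baseTerm (σ : Fin S.numSorts) (v : ℤ) : Term S σ :=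
  if Finite (Term S σ) then T₀ σ v else leaf hS R σ v

open Classical in
/-- The guard on the rank only makes the recursion visibly well founded: an argument of a node of
`ctorNodes` that is itself in `ctorNodes` has smaller rank, and off `ctorNodes` `realize` is
`baseTerm` anyway (see `realize_of_mem`). -/
noncomputable def realize (σ : Fin S.numSorts) (v : ℤ) : Term S σ :=
  if (σ, v) ∈ ctorNodes M R then
    ctorTerm hS M (fun τ u => if rank M R (τ, u) < rank M R (σ, v) then realize τ u
      else baseTerm hS T₀ R τ u) σ v
  else baseTerm hS T₀ R σ v
termination_by rank M R (σ, v)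

variable {σ : Fin S.numSorts} {v : ℤ}

theorem realize_of_notMem (h : (σ, v) ∉ ctorNodes M R) :
    realize hS M T₀ R σ v = baseTerm hS T₀ R σ v := by
  rw [realize, if_neg h]

theorem realize_of_mem (h : (σ, v) ∈ ctorNodes M R) :
    realize hS M T₀ R σ v = ctorTerm hS M (realize hS M T₀ R) σ v := by
  rw [realize, if_pos h]
  obtain ⟨-, -, f, rfl, hf⟩ := h
  rw [ctorTerm_ctorRes hS _ hf, ctorTerm_ctorRes hS _ hf]
  congr 1
  funext j
  split_ifs with hlt
  · rfl
  · exact (realize_of_notMem hS M T₀ R fun hc => hlt (rank_lt hc (hf.depthF_selF_lt j))).symm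

theorem realize_of_finite [Finite (Term S σ)] : realize hS M T₀ R σ v = T₀ σ v := by
  rw [realize_of_notMem hS M T₀ R fun h => (not_finite_iff_infinite.2 h.2.1) ‹_›, baseTerm,
    if_pos ‹_›]

theorem realize_of_infinite [Infinite (Term S σ)] (h : (σ, v) ∉ ctorNodes M R) :
    realize hS M T₀ R σ v = leaf hS R σ v := by
  rw [realize_of_notMem hS M T₀ R h, baseTerm, if_neg (not_finite_iff_infinite.2 ‹_›)]

theorem realizes_realize (hT₀ : Realizes M T₀ {p | Finite (Term S p.1) ∧ InSort S p.1 p.2}) :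
    Realizes M (realize hS M T₀ R) {p | p ∈ R ∧ InSort S p.1 p.2} := by
  intro f v ⟨hR, hv⟩ hf
  by_cases hfin : Finite (Term S (S.ctorRes f))
  · have := finite_term_ctorArgs hS (f := f)
    simp only [realize_of_finite, hT₀ f v ⟨hfin, hv⟩ hf]
  · rw [realize_of_mem hS M T₀ R ⟨hR, not_finite_iff_infinite.1 hfin, f, rfl, hf⟩,
      ctorTerm_ctorRes hS _ hf]

def InBand (d k : ℕ) : Prop :=
  d ≤ S.finiteDepthBound + k ∨ ∃ τ u, Infinite (Term S τ) ∧
    (leaf hS R τ u).depth ≤ d ∧ d ≤ (leaf hS R τ u).depth + k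

variable {hS R} in
theorem InBand.succ_mono {d k k' : ℕ} (h : InBand hS R d k) (hk : k < k') :
    InBand hS R (d + 1) k' := by
  exact h.imp (fun h => by omega) fun ⟨τ, u, hτ, h₁, h₂⟩ => ⟨τ, u, hτ, by omega, by omega⟩

theorem InBand.sup {ι : Type*} {s : Finset ι} {d : ι → ℕ} {k : ℕ}
    (h : ∀ i ∈ s, InBand hS R (d i) k) : InBand hS R (s.sup d) k :=
  Finset.sup_induction (p := fun d => InBand hS R d k) (Or.inl (Nat.zero_le _))
    (fun a ha b hb => by rcases le_total a b with hab | hab <;> simpa [hab]) h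

theorem depth_realize_inBand (hp : (σ, v) ∈ ctorNodes M R) :
    ∃ d, (realize hS M T₀ R σ v).depth = d + 1 ∧ InBand hS R d (rank M R (σ, v)) := by
  induction hn : rank M R (σ, v) using Nat.strong_induction_on generalizing σ v with
  | _ n ih =>
  rw [realize_of_mem hS M T₀ R hp]
  obtain ⟨-, -, f, rfl, hf⟩ := hp
  rw [ctorTerm_ctorRes hS _ hf, Term.depth_mk]
  refine ⟨_, rfl, InBand.sup hS R fun j _ => ?_⟩
  by_cases hc : ((S.ctorArgs f).get j, M.selF f j v) ∈ ctorNodes M R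
  · have hlt := hn ▸ rank_lt hc (hf.depthF_selF_lt j)
    obtain ⟨d, hd, hband⟩ := ih _ hlt hc rfl
    exact hd ▸ hband.succ_mono hlt
  · by_cases hfin : Finite (Term S ((S.ctorArgs f).get j))
    · rw [realize_of_finite]
      exact Or.inl ((depth_le_finiteDepthBound _).trans (Nat.le_add_right _ _))
    · have := not_finite_iff_infinite.1 hfin
      rw [realize_of_infinite hS M T₀ R hc]
      exact Or.inr ⟨_, _, this, le_rfl, Nat.le_add_right _ _⟩

theorem depth_realize_ne_depth_leaf {σ τ : Fin S.numSorts} [Infinite (Term S τ)] {v : ℤ}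
    (hp : (σ, v) ∈ ctorNodes M R) (u : ℤ) :
    (realize hS M T₀ R σ v).depth ≠ (leaf hS R τ u).depth := by
  obtain ⟨d, hd, hband⟩ := depth_realize_inBand hS M T₀ R hp
  have hrank := rank_lt_card_add_one M R (σ, v)
  have hdeep := lt_depth_leaf hS R (σ := τ) u
  rw [hd]
  rcases hband with hband | ⟨τ', u', hτ', h₁, h₂⟩
  · omega
  · by_cases heq : (τ', u') = (τ, u)
    · obtain ⟨rfl, rfl⟩ := Prod.mk.inj heq
      omega
    · rcases depth_leaf_spaced hS R heq with h | h <;> omega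

theorem exCtorSpec_of_realize_eq_mk {f : Fin S.numCtors}
    {args : (i : Fin (S.ctorArgs f).length) → Term S ((S.ctorArgs f).get i)}
    (hp : (S.ctorRes f, v) ∈ ctorNodes M R) (h : realize hS M T₀ R _ v = .mk f args) :
    ExCtorSpec M f v ∧ ∀ j, realize hS M T₀ R _ (M.selF f j v) = args j := by
  rw [realize_of_mem hS M T₀ R hp] at h
  obtain ⟨-, -, g, hg, hgv⟩ := hp
  obtain rfl : g = f := by
    simpa [head_ctorTerm hS _ hg hgv] using congrArg Term.head h
  rw [ctorTerm_ctorRes hS _ hgv] at h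
  exact ⟨hgv, congrFun (Term.mk.inj h)⟩

theorem realize_injOn (hT₀ : ∀ σ, Finite (Term S σ) → Set.InjOn (T₀ σ) {v | InSort S σ v})
    (σ : Fin S.numSorts) : Set.InjOn (realize hS M T₀ R σ) {v | InSort S σ v} := by
  intro v hv w hw h
  suffices H : ∀ σ (t : Term S σ) v w, InSort S σ v → InSort S σ w →
      realize hS M T₀ R σ v = t → realize hS M T₀ R σ w = t → v = w from H σ _ v w hv hw h rfl
  intro σ t
  induction t with
  | mk f args ih =>
  intro v w hv hw hvt hwt
  by_cases hfin : Finite (Term S (S.ctorRes f))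
  · rw [realize_of_finite] at hvt hwt
    exact hT₀ _ hfin hv hw (hvt.trans hwt.symm)
  have := not_finite_iff_infinite.1 hfin
  by_cases hvc : (S.ctorRes f, v) ∈ ctorNodes M R <;>
    by_cases hwc : (S.ctorRes f, w) ∈ ctorNodes M R
  · obtain ⟨hfv, hvargs⟩ := exCtorSpec_of_realize_eq_mk hS M T₀ R hvc hvt
    obtain ⟨hfw, hwargs⟩ := exCtorSpec_of_realize_eq_mk hS M T₀ R hwc hwt
    exact hfv.eq_of_selF_eq hfw fun j =>
      ih j _ _ (hfv.inSort_selF j) (hfw.inSort_selF j) (hvargs j) (hwargs j)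
  · rw [realize_of_infinite hS M T₀ R hwc] at hwt
    exact absurd (congrArg Term.depth (hvt.trans hwt.symm))
      (depth_realize_ne_depth_leaf hS M T₀ R hvc w)
  · rw [realize_of_infinite hS M T₀ R hvc] at hvt
    exact absurd (congrArg Term.depth (hwt.trans hvt.symm))
      (depth_realize_ne_depth_leaf hS M T₀ R hwc v)
  · rw [realize_of_infinite hS M T₀ R hvc] at hvt
    rw [realize_of_infinite hS M T₀ R hwc] at hwt
    exact leaf_inj hS R (hvt.trans hwt.symm)

end Realize

theorem exists_realization (hS : S.WellDefined) (M : RModel S) (R : Finset (Fin S.numSorts × ℤ)) :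
    ∃ T : ∀ σ, ℤ → Term S σ, (∀ σ, Set.InjOn (T σ) {v | InSort S σ v}) ∧
      Realizes M T {p | p ∈ R ∧ InSort S p.1 p.2} := by
  obtain ⟨T₀, hinj, hreal⟩ := exists_realizes_finite hS M
  exact ⟨realize hS M T₀ R, realize_injOn hS M T₀ R hinj, realizes_realize hS M T₀ R hreal⟩

open Classical in
noncomputable def selInterp (hS : S.WellDefined) (M : RModel S) (T : ∀ σ, ℤ → Term S σ) :
    SelInterp S where
  sel f j t :=
    if h : ∃ args, Term.mk f args = t then h.choose j
    else if h' : ∃ v, InSort S (S.ctorRes f) v ∧ T _ v = t then T _ (M.selF f j h'.choose)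
    else (hS _).some
  sel_mk f j args := by
    have h : ∃ args', Term.mk f args' = Term.mk f args := ⟨args, rfl⟩
    simp only [dif_pos h, Term.mk.inj h.choose_spec]

theorem selInterp_sel_of_head_ne (hS : S.WellDefined) (M : RModel S) {T : ∀ σ, ℤ → Term S σ}
    {f : Fin S.numCtors} (j : Fin (S.ctorArgs f).length) {v : ℤ}
    (hinj : Set.InjOn (T (S.ctorRes f)) {v | InSort S (S.ctorRes f) v})
    (hv : InSort S (S.ctorRes f) v) (hne : (T (S.ctorRes f) v).head ≠ f) :
    (selInterp hS M T).sel f j (T _ v) = T _ (M.selF f j v) := by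
  have h : ¬ ∃ args, Term.mk f args = T _ v := fun ⟨args, h⟩ => hne (h ▸ Term.head_mk f args)
  have h' : ∃ u, InSort S (S.ctorRes f) u ∧ T (S.ctorRes f) u = T _ v := ⟨v, hv, rfl⟩
  simp only [selInterp]
  rw [dif_neg h, dif_pos h', hinj h'.choose_spec.1 hv h'.choose_spec.2]

def Lit.nodes (β : (σ : Fin S.numSorts) → V σ → ℤ) : Lit S V → Finset (Fin S.numSorts × ℤ)
  | .ctorEq f xs x0 => insert (S.ctorRes f, β _ x0)
      (Finset.univ.image fun i => ((S.ctorArgs f).get i, β _ (xs i)))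
  | .selEq f j x y => {(S.ctorRes f, β _ x), ((S.ctorArgs f).get j, β _ y)}
  | .tst f x => {(S.ctorRes f, β _ x)}
  | .ntst f x => {(S.ctorRes f, β _ x)}
  | .eqv (σ := σ) x y => {(σ, β _ x), (σ, β _ y)}
  | .nev (σ := σ) x y => {(σ, β _ x), (σ, β _ y)}

def Formula.nodes (β : (σ : Fin S.numSorts) → V σ → ℤ) :
    Formula S V → Finset (Fin S.numSorts × ℤ)
  | .fls => ∅
  | .lit l => l.nodes β
  | .and φ ψ => φ.nodes β ∪ ψ.nodes β
  | .or φ ψ => φ.nodes β ∪ ψ.nodes β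

section Soundness

variable (hS : S.WellDefined) {M : RModel S} {β : (σ : Fin S.numSorts) → V σ → ℤ}
  {T : ∀ σ, ℤ → Term S σ} {R : Finset (Fin S.numSorts × ℤ)}

theorem Lit.holds_of_redHolds (hinj : ∀ σ, Set.InjOn (T σ) {v | InSort S σ v})
    (hT : Realizes M T {p | p ∈ R ∧ InSort S p.1 p.2}) (hβ : ∀ σ x, InSort S σ (β σ x))
    {l : Lit S V} (hR : l.nodes β ⊆ R) (h : l.redHolds M β) :
    l.holds (selInterp hS M T) fun σ x => T σ (β σ x) := by
  have hmem : ∀ {σ} (x : V σ), (σ, β σ x) ∈ l.nodes β →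
      (σ, β σ x) ∈ {p | p ∈ R ∧ InSort S p.1 p.2} := fun x hx => ⟨hR hx, hβ _ x⟩
  cases l with
  | ctorEq f xs x0 =>
    show Term.mk f (fun i => T _ (β _ (xs i))) = T _ (β _ x0)
    rw [hT f _ (hmem x0 (by simp [Lit.nodes])) ⟨_, fun _ => hβ _ _, h⟩]
    simp only [(h.2.2 _).1]
  | selEq f j x y =>
    obtain ⟨hsel, g, hg, hgx⟩ := h
    show (selInterp hS M T).sel f j (T _ (β _ x)) = T _ (β _ y)
    rw [← hsel]
    by_cases hgf : g = f
    · subst hgf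
      rw [hT g _ (hmem x (by simp [Lit.nodes])) hgx, SelInterp.sel_mk]
    · exact selInterp_sel_of_head_ne hS M j (hinj _) (hβ _ x)
        (hT.head_eq hg (hmem x (by simp [Lit.nodes])) hgx ▸ hgf)
  | tst f x => exact hT.head_eq rfl (hmem x (by simp [Lit.nodes])) h
  | ntst f x =>
    obtain ⟨g, hg, hgf, hgx⟩ := h
    show (T _ (β _ x)).head ≠ f
    rwa [hT.head_eq hg (hmem x (by simp [Lit.nodes])) hgx]
  | eqv x y => exact congrArg (T _) h
  | nev x y => exact fun hxy => h (hinj _ (hβ _ x) (hβ _ y) hxy)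

theorem Formula.holds_of_redHolds (hinj : ∀ σ, Set.InjOn (T σ) {v | InSort S σ v})
    (hT : Realizes M T {p | p ∈ R ∧ InSort S p.1 p.2}) (hβ : ∀ σ x, InSort S σ (β σ x))
    {φ : Formula S V} (hR : φ.nodes β ⊆ R) (h : φ.redHolds M β) :
    φ.holds (selInterp hS M T) fun σ x => T σ (β σ x) := by
  induction φ with
  | fls => exact h
  | lit l => exact Lit.holds_of_redHolds hS hinj hT hβ hR h
  | and φ ψ ihφ ihψ =>
    exact ⟨ihφ (Finset.union_subset_left hR) h.1, ihψ (Finset.union_subset_right hR) h.2⟩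
  | or φ ψ ihφ ihψ =>
    exact h.imp (ihφ (Finset.union_subset_left hR)) (ihψ (Finset.union_subset_right hR))

end Soundness

theorem Formula.adtSat_of_redSat (hS : S.WellDefined) {φ : Formula S V} (h : φ.RedSat) :
    φ.ADTSat := by
  obtain ⟨M, β, hred, hβ⟩ := h
  obtain ⟨T, hinj, hT⟩ := exists_realization hS M (φ.nodes β)
  exact ⟨selInterp hS M T, _, Formula.holds_of_redHolds hS hinj hT hβ subset_rfl hred⟩

end ADTSig

open ADTSig in
/-- **Theorem 1.** The reduct `φ̃` of a flat ADT formula `φ` in NNF over a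
well-defined ADT is satisfiable over EUF+LIA if and only if `φ` is
satisfiable over the ADT. -/
theorem reduction_sound_and_complete (S : ADTSig) (hS : S.WellDefined)
    (V : Fin S.numSorts → Type) (φ : Formula S V) :
    φ.RedSat ↔ φ.ADTSat :=
  ⟨Formula.adtSat_of_redSat hS, Formula.redSat_of_adtSat hS⟩
end

section
/- Let n ≥ 1 be a natural number and let R ⊆ ℕ be a semi-linear set (a finite union of arithmetic progressions { a + k·b : k ∈ ℕ }). If for every k ∈ ℕ the set ℕ·n + R differs from {0,…,k}·n + R, then there exists a finite subset S ⊆ R such that for infinitely many points s ∈ ℕ·n + R one has { x ∈ R : s ∈ ℕ·n + x } ⊆ S. -/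
/-- The set `ℕ·n + R = { j·n + r : j ∈ ℕ, r ∈ R }`. -/
def natMulAdd (n : ℕ) (R : Set ℕ) : Set ℕ :=
  {m | ∃ j : ℕ, ∃ r ∈ R, m = j * n + r}

/-- The set `{0,…,k}·n + R = { j·n + r : 0 ≤ j ≤ k, r ∈ R }`. -/
def boundedMulAdd (k n : ℕ) (R : Set ℕ) : Set ℕ :=
  {m | ∃ j ≤ k, ∃ r ∈ R, m = j * n + r}

/-- `R ⊆ ℕ` is semi-linear if it is a finite union of arithmetic progressions
`{ a + k·b : k ∈ ℕ }`. -/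
def SemiLinear (R : Set ℕ) : Prop :=
  ∃ l : List (ℕ × ℕ), R = {m | ∃ p ∈ l, ∃ k : ℕ, m = p.1 + k * p.2}

lemma foldr_max_le {α : Type*} (f : α → ℕ) (l : List α) {a : α} (ha : a ∈ l) :
    f a ≤ l.foldr (fun x m => max (f x) m) 0 := by
  induction l with
  | nil => simp at ha
  | cons b t ih =>
    rcases List.mem_cons.mp ha with rfl | h
    · exact le_max_left _ _
    · exact le_trans (ih h) (le_max_right _ _)

/-- Let `n ≥ 1` and let `R ⊆ ℕ` be semi-linear.  If for every `k ∈ ℕ` the set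
`ℕ·n + R` differs from `{0,…,k}·n + R`, then there is a finite subset `S ⊆ R`
such that for infinitely many points `s ∈ ℕ·n + R` one has
`{ x ∈ R : s ∈ ℕ·n + x } ⊆ S`. -/
theorem semilinear_finite_base_of_unbounded (n : ℕ) (hn : 1 ≤ n) (R : Set ℕ)
    (hR : SemiLinear R)
    (hdiff : ∀ k : ℕ, natMulAdd n R ≠ boundedMulAdd k n R) :
    ∃ S : Finset ℕ, ↑S ⊆ R ∧
      {s ∈ natMulAdd n R | ∀ x ∈ R, (∃ j : ℕ, s = j * n + x) → x ∈ S}.Infinite := by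
  by_cases hfin : ∃ r ∈ R, (R ∩ {x | x % n = r % n}).Finite
  · obtain ⟨r, hr, hfin⟩ := hfin
    refine ⟨hfin.toFinset, ?_, ?_⟩
    · intro x hx
      exact ((Set.Finite.mem_toFinset hfin).mp hx).1
    · apply Set.infinite_of_injective_forall_mem (f := fun j : ℕ => j * n + r)
      · intro a b h
        have h' : a * n + r = b * n + r := h
        exact Nat.eq_of_mul_eq_mul_right (show 0 < n by omega)
          (show a * n = b * n by omega)
      · intro j
        refine ⟨⟨j, r, hr, rfl⟩, ?_⟩
        rintro x hx ⟨jp, hjp⟩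
        rw [Set.Finite.mem_toFinset]
        refine ⟨hx, ?_⟩
        show x % n = r % n
        have h1 : (jp * n + x) % n = x % n := by
          rw [Nat.add_comm, Nat.add_mul_mod_self_right]
        have h2 : (j * n + r) % n = r % n := by
          rw [Nat.add_comm, Nat.add_mul_mod_self_right]
        rw [← h1, ← hjp, h2]
  · push_neg at hfin
    exfalso
    obtain ⟨l, rfl⟩ := hR
    set A := l.foldr (fun p m => max (p.1 + n * p.2) m) 0 with hA
    set B := l.foldr (fun p m => max p.2 m) 0 with hB
    apply hdiff (A + n * B)
    ext s
    simp only [natMulAdd, boundedMulAdd, Set.mem_setOf_eq]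
    constructor
    · rintro ⟨j, r, hr, rfl⟩
      by_cases hj : j ≤ A + n * B
      · exact ⟨j, hj, r, hr, rfl⟩
      push_neg at hj
      have hinf := hfin r hr
      have hex : ∃ p ∈ l, ({m | ∃ k, m = p.1 + k * p.2} ∩ {x | x % n = r % n}).Infinite := by
        by_contra hall
        push_neg at hall
        apply hinf
        apply Set.Finite.subset (Set.Finite.biUnion l.finite_toSet (fun p hp => hall p hp))
        rintro x ⟨⟨p, hp, k, rfl⟩, hc⟩
        exact Set.mem_biUnion hp ⟨⟨k, rfl⟩, hc⟩
      obtain ⟨⟨a, b⟩, hp, hinfp⟩ := hex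
      simp only at hinfp
      have hb : 1 ≤ b := by
        rcases Nat.eq_zero_or_pos b with hb0 | h
        · exfalso
          apply hinfp
          apply Set.Finite.subset (Set.finite_singleton a)
          rintro x ⟨⟨k, rfl⟩, -⟩
          simp [hb0]
        · exact h
      obtain ⟨m, ⟨k0, rfl⟩, hmc⟩ := hinfp.nonempty
      have hmc : (a + k0 * b) % n = r % n := hmc
      set k0' := k0 % n with hk0'
      have hk0lt : k0' < n := Nat.mod_lt _ (by omega)
      have hbasec : (a + k0' * b) % n = r % n := by
        have h1 : k0' ≡ k0 [MOD n] := Nat.mod_modEq k0 n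
        have h2 : a + k0' * b ≡ a + k0 * b [MOD n] := (h1.mul_right b).add_left a
        calc (a + k0' * b) % n = (a + k0 * b) % n := h2
          _ = r % n := hmc
      have hAa : a + n * b ≤ A := foldr_max_le (fun p => p.1 + n * p.2) l hp
      have hBb : b ≤ B := foldr_max_le Prod.snd l hp
      have hjj : j ≤ j * n := Nat.le_mul_of_pos_right j (by omega)
      have hk0b : k0' * b ≤ n * b := Nat.mul_le_mul_right b (le_of_lt hk0lt)
      set base := a + k0' * b with hbasedef
      have hbase_le : base ≤ j * n + r := by omega
      have hnb : 0 < n * b := Nat.mul_pos (by omega) hb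
      set q := (j * n + r - base) % (n * b) with hqdef
      have hqlt : q < n * b := Nat.mod_lt _ hnb
      set t := (j * n + r - base) / (n * b) with htdef
      have hdm : t * (n * b) + q = j * n + r - base := Nat.div_add_mod' _ _
      set rp := base + t * (n * b) with hrpdef
      have hrple : rp ≤ j * n + r := by omega
      have hrpR : ∃ p ∈ l, ∃ k, rp = p.1 + k * p.2 :=
        ⟨(a, b), hp, k0' + t * n, by simp only [hrpdef, hbasedef]; ring⟩
      have hrpc : rp % n = r % n := by
        have h3 : rp = (a + k0' * b) + (t * b) * n := by rw [hrpdef, hbasedef]; ring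
        rw [h3, Nat.add_mul_mod_self_right]
        exact hbasec
      have hsc : (j * n + r) % n = r % n := by
        rw [Nat.add_comm, Nat.add_mul_mod_self_right]
      have hmdvd : n ∣ (j * n + r - rp) :=
        (Nat.modEq_iff_dvd' hrple).mp (hrpc.trans hsc.symm)
      set jp := (j * n + r - rp) / n with hjpdef
      have hjpn : jp * n = j * n + r - rp := Nat.div_mul_cancel hmdvd
      have heq : jp * n + rp = j * n + r := by omega
      have hBle : B ≤ n * B := Nat.le_mul_of_pos_left B (by omega)
      have hjple : jp ≤ A + n * B := by
        have h1 : jp * n < n * b := by omega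
        have h2 : jp < b := by
          by_contra h
          push_neg at h
          have h3 : n * b ≤ n * jp := Nat.mul_le_mul_left n h
          have h4 : n * jp = jp * n := Nat.mul_comm _ _
          omega
        omega
      exact ⟨jp, hjple, rp, hrpR, heq.symm⟩
    · rintro ⟨j, -, r, hr, rfl⟩
      exact ⟨j, r, hr, rfl⟩
end

section
/- Let an ADT be well-defined. Let P be a finite set of pairs (a, σ) of an integer a and a sort σ such that distinct pairs in P have distinct first components a whenever they share the same sort, and for each sort σ the number of pairs in P with second component σ is at most |𝕋_σ|. Let D ⊆ P and let dep be a function assigning to each (a, σ) ∈ D a tuple ⟨f, (c₁, σ₁), …, (c_n, σ_n)⟩ with f : σ₁ × ⋯ × σ_n → σ a constructor of the ADT and (c_j, σ_j) ∈ P for all j, such that: (i) dep is injective on pairs sharing the same constructor, i.e., distinct elements of D with the same assigned constructor f have different child tuples; and (ii) there is a function depth : P → ℤ with depth(a, σ) > depth(c_j, σ_j) for every (a, σ) ∈ D with children (c_j, σ_j). Then there exists an injective function γ : P → 𝕋 such that γ(a, σ) ∈ 𝕋_σ for every (a, σ) ∈ P, and γ(a, σ) = f(γ(c₁, σ₁),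 …, γ(c_n, σ_n)) whenever dep(a, σ) = ⟨f, (c₁, σ₁), …, (c_n, σ_n)⟩. -/
namespace ADTSig

def Term.size {S : ADTSig} : {σ : Fin S.numSorts} → Term S σ → ℕ
  | _, .mk _ args => 1 + ∑ i, (args i).size

def ExpandingSort (S : ADTSig) (σ : Fin S.numSorts) : Prop :=
  ∀ n : ℕ, ∃ b : ℕ, ∀ b' ≥ b,
    (∀ t : S.Term σ, t.size ≠ b') ∨ n ≤ Nat.card {t : S.Term σ // t.size = b'}

def ExpandingADT (S : ADTSig) : Prop := ∀ σ, ExpandingSort S σ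

end ADTSig

/-!
The values on `D` are forced, by recursion along `depth`, once values at the free nodes `P \ D`
are chosen. By injectivity of `dep`, a collision between two nodes of `D` yields a collision
between two of their children, so it suffices that no free node shares its value with another
node. Free nodes are fixed one at a time, in increasing order of sort, where finite sorts are
ordered by the maximal size of their terms and lie below the infinite ones. A free node of a finite
sort takes an unused term of its sort; this only changes nodes of larger sorts, because the
argument sorts of a constructor into a finite sort have smaller terms. A free node of an infinite
sort takes a term larger than every current value, and every node it changes grows larger still.
-/

universe u

lemma Sigma.exists_mk_notMem {ι : Type u} {β : ι → Type u} (i : ι) (s : Finset (Σ i, β i))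
    (hs : (s.card : Cardinal) < Cardinal.mk (β i)) : ∃ b : β i, ⟨i, b⟩ ∉ s := by
  by_contra! h
  refine hs.not_ge ?_
  rw [← Cardinal.mk_coe_finset]
  exact Cardinal.mk_le_of_injective (f := fun b => (⟨⟨i, b⟩, h b⟩ : s))
    fun b b' hbb' => eq_of_heq (Sigma.mk.inj_iff.mp (congrArg Subtype.val hbb')).2

namespace ADTSig

variable {S : ADTSig}

abbrev AnyTerm (S : ADTSig) := Σ σ, S.Term σ

namespace Term

lemma size_mk (f : Fin S.numCtors) (a : ∀ i, S.Term ((S.ctorArgs f).get i)) :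
    (mk f a).size = 1 + ∑ i, (a i).size := rfl

lemma size_arg_lt (f : Fin S.numCtors) (a : ∀ i, S.Term ((S.ctorArgs f).get i))
    (j : Fin (S.ctorArgs f).length) : (a j).size < (mk f a).size := by
  have := Finset.single_le_sum (f := fun i => (a i).size) (fun i _ => Nat.zero_le _)
    (Finset.mem_univ j)
  rw [size_mk]
  omega

lemma size_cast {σ τ : Fin S.numSorts} (h : σ = τ) (t : S.Term σ) :
    (cast (congrArg S.Term h) t).size = t.size := by
  subst h; rfl

lemma size_pos : ∀ {σ : Fin S.numSorts} (t : S.Term σ), 0 < t.size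
  | _, mk _ _ => by rw [size_mk]; omega

lemma sigma_mk_inj {f g : Fin S.numCtors} {a : ∀ i, S.Term ((S.ctorArgs f).get i)}
    {b : ∀ i, S.Term ((S.ctorArgs g).get i)}
    (h : (⟨_, mk f a⟩ : S.AnyTerm) = ⟨_, mk g b⟩) :
    f = g ∧ ∀ j (hj : j < (S.ctorArgs f).length) (hj' : j < (S.ctorArgs g).length),
      (⟨_, a ⟨j, hj⟩⟩ : S.AnyTerm) = ⟨_, b ⟨j, hj'⟩⟩ := by
  obtain rfl : f = g := congrArg (fun t : S.AnyTerm => t.2.head) h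
  obtain rfl : a = b := by
    obtain ⟨-, h⟩ := Sigma.mk.inj_iff.mp h
    injection eq_of_heq h
  exact ⟨rfl, fun _ _ _ => rfl⟩

lemma finite_size_le (n : ℕ) : Finite {u : S.AnyTerm // u.2.size ≤ n} := by
  induction n with
  | zero =>
    refine @Finite.of_subsingleton _ ⟨fun ⟨⟨_, t⟩, ht⟩ => ?_⟩
    exact absurd ht (size_pos t).not_ge
  | succ n ih =>
    let args : {u : S.AnyTerm // u.2.size ≤ n + 1} →
        Σ f : Fin S.numCtors, (Fin (S.ctorArgs f).length → {u : S.AnyTerm // u.2.size ≤ n}) :=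
      fun | ⟨⟨_, mk f a⟩, h⟩ => ⟨f, fun i => ⟨⟨_, a i⟩, by
        have := size_arg_lt f a i
        dsimp only at h ⊢
        omega⟩⟩
    refine Finite.of_injective args ?_
    rintro ⟨⟨_, ⟨f, a⟩⟩, _⟩ ⟨⟨_, ⟨g, b⟩⟩, _⟩ h
    obtain ⟨rfl, h⟩ := Sigma.mk.inj_iff.mp h
    obtain rfl : a = b := funext fun i =>
      eq_of_heq (Sigma.mk.inj_iff.mp (congrArg Subtype.val (congrFun (eq_of_heq h) i))).2
    rfl

lemma exists_size_gt (σ : Fin S.numSorts) [Infinite (S.Term σ)] (B : ℕ) :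
    ∃ t : S.Term σ, B < t.size := by
  by_contra! h
  have := finite_size_le (S := S) B
  let bounded (t : S.Term σ) : {u : S.AnyTerm // u.2.size ≤ B} := ⟨⟨σ, t⟩, h t⟩
  refine (Finite.of_injective bounded fun t t' htt' => ?_).not_infinite ‹_›
  exact eq_of_heq (Sigma.mk.inj_iff.mp (congrArg Subtype.val htt')).2

end Term

/-- The largest size of a term of sort `σ`; only meaningful when `𝕋_σ` is finite. -/
noncomputable def maxSize (S : ADTSig) (σ : Fin S.numSorts) : ℕ := ⨆ t : S.Term σ, t.size

lemma size_le_maxSize {σ : Fin S.numSorts} [Finite (S.Term σ)] (t : S.Term σ) :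
    t.size ≤ S.maxSize σ :=
  le_ciSup (Set.finite_range _).bddAbove t

open Classical in
noncomputable def sortKey (S : ADTSig) (σ : Fin S.numSorts) : WithTop ℕ :=
  if Finite (S.Term σ) then S.maxSize σ else ⊤

lemma sortKey_ne_top_iff {σ : Fin S.numSorts} : S.sortKey σ ≠ ⊤ ↔ Finite (S.Term σ) := by
  unfold sortKey; split_ifs with h <;> simp [h]

/-- A term of the argument sort, completed arbitrarily, is a proper subterm of a term of the
result sort. -/
lemma sortKey_arg_lt (hS : S.WellDefined) (f : Fin S.numCtors) (j : Fin (S.ctorArgs f).length)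
    (h : S.sortKey (S.ctorRes f) ≠ ⊤) :
    S.sortKey ((S.ctorArgs f).get j) < S.sortKey (S.ctorRes f) := by
  classical
  set τ := (S.ctorArgs f).get j
  have : Finite (S.Term (S.ctorRes f)) := sortKey_ne_top_iff.mp h
  have : Nonempty (S.Term τ) := hS τ
  let args (t : S.Term τ) (i : Fin (S.ctorArgs f).length) : S.Term ((S.ctorArgs f).get i) :=
    if hi : i = j then cast (by rw [hi]) t else Classical.choice (hS _)
  have args_self (t : S.Term τ) : args t j = t := by simp [args]
  have hplug : Function.Injective fun t => Term.mk f (args t) := fun t t' htt' => by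
    rw [← args_self t, ← args_self t', (by injection htt' : args t = args t')]
  have : Finite (S.Term τ) := Finite.of_injective _ hplug
  obtain ⟨t, ht⟩ := exists_eq_ciSup_of_finite (f := fun t : S.Term τ => t.size)
  have hlt : S.maxSize τ < S.maxSize (S.ctorRes f) := by
    calc S.maxSize τ = t.size := ht.symm
      _ = (args t j).size := by rw [args_self]
      _ < (Term.mk f (args t)).size := Term.size_arg_lt f _ j
      _ ≤ S.maxSize (S.ctorRes f) := size_le_maxSize _
  simp [sortKey, *]

structure TermDag (S : ADTSig) where
  P : Finset (ℤ × Fin S.numSorts)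
  D : Finset (ℤ × Fin S.numSorts)
  depF : ℤ × Fin S.numSorts → Fin S.numCtors
  depC : ℤ × Fin S.numSorts → ℕ → ℤ
  depth : ℤ × Fin S.numSorts → ℤ
  ctorRes_depF : ∀ p ∈ D, S.ctorRes (depF p) = p.2
  child_mem : ∀ p ∈ D, ∀ j : Fin (S.ctorArgs (depF p)).length,
    (depC p j.val, (S.ctorArgs (depF p)).get j) ∈ P
  inj : ∀ p ∈ D, ∀ q ∈ D, depF p = depF q →
    (∀ j < (S.ctorArgs (depF p)).length, depC p j = depC q j) → p = q
  depth_child_lt : ∀ p ∈ D, ∀ j : Fin (S.ctorArgs (depF p)).length,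
    depth (depC p j.val, (S.ctorArgs (depF p)).get j) < depth p

namespace TermDag

variable (C : TermDag S)

abbrev child (p : ℤ × Fin S.numSorts) (j : Fin (S.ctorArgs (C.depF p)).length) :
    ℤ × Fin S.numSorts :=
  (C.depC p j, (S.ctorArgs (C.depF p)).get j)

def rank (p : ℤ × Fin S.numSorts) : ℕ := (C.P.filter fun q => C.depth q < C.depth p).card

lemma rank_child_lt {p : ℤ × Fin S.numSorts} (hp : p ∈ C.D)
    (j : Fin (S.ctorArgs (C.depF p)).length) : C.rank (C.child p j) < C.rank p := by
  refine Finset.card_lt_card <| (Finset.ssubset_iff_of_subset fun q hq => ?_).mpr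
    ⟨C.child p j, ?_, by simp⟩
  · simp only [Finset.mem_filter] at hq ⊢
    exact ⟨hq.1, hq.2.trans (C.depth_child_lt p hp j)⟩
  · simpa using ⟨C.child_mem p hp j, C.depth_child_lt p hp j⟩

lemma induction {motive : ℤ × Fin S.numSorts → Prop}
    (step : ∀ p, (p ∈ C.D → ∀ j, motive (C.child p j)) → motive p)
    (p : ℤ × Fin S.numSorts) : motive p :=
  (measure C.rank).wf.induction p fun p ih => step p fun hp j => ih _ (C.rank_child_lt hp j)

noncomputable def assign (v : ∀ p : ℤ × Fin S.numSorts, S.Term p.2)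
    (p : ℤ × Fin S.numSorts) : S.Term p.2 :=
  if hp : p ∈ C.D then
    cast (congrArg S.Term (C.ctorRes_depF p hp))
      (Term.mk (C.depF p) fun j => assign v (C.child p j))
  else v p
termination_by C.rank p
decreasing_by exact C.rank_child_lt hp j

variable {C} (v : ∀ p : ℤ × Fin S.numSorts, S.Term p.2)

lemma assign_of_notMem {p : ℤ × Fin S.numSorts} (hp : p ∉ C.D) : C.assign v p = v p := by
  rw [assign, dif_neg hp]

lemma assign_of_mem {p : ℤ × Fin S.numSorts} (hp : p ∈ C.D) :
    C.assign v p = cast (congrArg S.Term (C.ctorRes_depF p hp))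
      (Term.mk (C.depF p) fun j => C.assign v (C.child p j)) := by
  rw [assign, dif_pos hp]

noncomputable def value (p : ℤ × Fin S.numSorts) : S.AnyTerm := ⟨p.2, C.assign v p⟩

lemma value_of_mem {p : ℤ × Fin S.numSorts} (hp : p ∈ C.D) :
    C.value v p = ⟨_, Term.mk (C.depF p) fun j => C.assign v (C.child p j)⟩ := by
  rw [value, assign_of_mem v hp]
  exact Sigma.ext (C.ctorRes_depF p hp).symm (cast_heq _ _)

lemma value_sort {p q : ℤ × Fin S.numSorts} (h : C.value v p = C.value v q) : p.2 = q.2 :=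
  congrArg Sigma.fst h

lemma value_size {p q : ℤ × Fin S.numSorts} (h : C.value v p = C.value v q) :
    (C.assign v p).size = (C.assign v q).size :=
  congrArg (fun t : S.AnyTerm => t.2.size) h

def Isolated (y : ℤ × Fin S.numSorts) : Prop :=
  ∀ q ∈ C.P, C.value v q = C.value v y → q = y

/-- Inner nodes with equal values have equal constructors and, inductively, equal children. -/
lemma value_injOn_of_isolated (hv : ∀ y ∈ C.P \ C.D, C.Isolated v y) :
    ∀ p ∈ C.P, ∀ q ∈ C.P, C.value v p = C.value v q → p = q := by
  refine C.induction fun p ih hp q hq h => ?_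
  by_cases hpD : p ∈ C.D
  · by_cases hqD : q ∈ C.D
    · rw [value_of_mem v hpD, value_of_mem v hqD] at h
      obtain ⟨hf, hargs⟩ := Term.sigma_mk_inj h
      refine C.inj p hpD q hqD hf fun j hj => ?_
      have hj' : j < (S.ctorArgs (C.depF q)).length := hf ▸ hj
      exact congrArg Prod.fst <| ih hpD ⟨j, hj⟩ (C.child_mem p hpD _) _
        (C.child_mem q hqD ⟨j, hj'⟩) (hargs j hj hj')
    · exact hv q (Finset.mem_sdiff.mpr ⟨hq, hqD⟩) p hp h
  · exact (hv p (Finset.mem_sdiff.mpr ⟨hp, hpD⟩) q hq h.symm).symm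

lemma sortKey_child_lt (hS : S.WellDefined) {p : ℤ × Fin S.numSorts} (hp : p ∈ C.D)
    (h : S.sortKey p.2 ≠ ⊤) (j : Fin (S.ctorArgs (C.depF p)).length) :
    S.sortKey (C.child p j).2 < S.sortKey p.2 := by
  have hres := C.ctorRes_depF p hp
  exact hres ▸ sortKey_arg_lt hS _ j (hres ▸ h)

section Update

variable {x : ℤ × Fin S.numSorts} (u : S.Term x.2)

lemma assign_update_self (hx : x ∉ C.D) : C.assign (Function.update v x u) x = u := by
  rw [assign_of_notMem _ hx, Function.update_self]

lemma assign_update_of_notMem {y : ℤ × Fin S.numSorts} (hy : y ∉ C.D) (hyx : y ≠ x) :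
    C.assign (Function.update v x u) y = C.assign v y := by
  rw [assign_of_notMem _ hy, assign_of_notMem _ hy, Function.update_of_ne hyx]

lemma assign_update_of_sortKey_le (hS : S.WellDefined) (hx : S.sortKey x.2 ≠ ⊤) :
    ∀ p, p ≠ x → S.sortKey p.2 ≤ S.sortKey x.2 →
      C.assign (Function.update v x u) p = C.assign v p := by
  refine C.induction fun p ih hpx hkey => ?_
  by_cases hp : p ∈ C.D
  · have hlt (j) : S.sortKey (C.child p j).2 < S.sortKey x.2 :=
      (C.sortKey_child_lt hS hp (ne_top_of_le_ne_top hx hkey) j).trans_le hkey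
    rw [assign_of_mem _ hp, assign_of_mem _ hp]
    congr 2
    funext j
    exact ih hp j (fun h => (hlt j).ne (by rw [h])) (hlt j).le
  · exact assign_update_of_notMem v u hp hpx

/-- A node whose value changes contains `u` as a proper subterm. -/
lemma assign_update_eq_or_size_lt (hx : x ∉ C.D) :
    ∀ p, p ≠ x → C.assign (Function.update v x u) p = C.assign v p ∨
      u.size < (C.assign (Function.update v x u) p).size := by
  refine C.induction fun p ih hpx => ?_
  by_cases hp : p ∈ C.D
  · by_cases hall : ∀ j, C.child p j ≠ x ∧
        C.assign (Function.update v x u) (C.child p j) = C.assign v (C.child p j)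
    · left
      rw [assign_of_mem _ hp, assign_of_mem _ hp]
      congr 2
      funext j
      exact (hall j).2
    · right
      obtain ⟨j, hj⟩ := not_forall.mp hall
      have hchild : u.size ≤ (C.assign (Function.update v x u) (C.child p j)).size := by
        by_cases hcx : C.child p j = x
        · have := congrArg (fun q => (C.assign (Function.update v x u) q).size) hcx
          simp only [assign_update_self v u hx] at this
          exact this.ge
        · exact ((ih hp j hcx).resolve_left fun h => hj ⟨hcx, h⟩).le
      rw [assign_of_mem _ hp, Term.size_cast (C.ctorRes_depF p hp)]
      exact hchild.trans_lt
        (Term.size_arg_lt _ (fun j => C.assign (Function.update v x u) (C.child p j)) j)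
  · exact .inl (assign_update_of_notMem v u hp hpx)

/-- `x` gets a term larger than all current values; nodes whose value changes become larger
still. -/
lemma exists_update_isolated_of_infinite (hx : x ∉ C.D) [Infinite (S.Term x.2)]
    {G : Finset (ℤ × Fin S.numSorts)} (hGP : G ⊆ C.P \ C.D) (hxG : x ∉ G)
    (hG : ∀ y ∈ G, C.Isolated v y) : ∃ v', ∀ y ∈ insert x G, C.Isolated v' y := by
  obtain ⟨u, hu⟩ := Term.exists_size_gt x.2 (C.P.sup fun p => (C.assign v p).size)
  have hbound (p) (hp : p ∈ C.P) : (C.assign v p).size < u.size :=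
    (Finset.le_sup (f := fun p => (C.assign v p).size) hp).trans_lt hu
  have hchange := C.assign_update_eq_or_size_lt v u hx
  set v' := Function.update v x u
  have hx' (q) (hq : q ∈ C.P) (hqx : q ≠ x) : C.value v' q ≠ C.value v' x := fun h => by
    have hsize := value_size v' h
    rw [assign_update_self v u hx] at hsize
    rcases hchange q hqx with h' | h'
    · exact (hbound q hq).ne (h' ▸ hsize)
    · exact h'.ne' hsize
  refine ⟨v', (Finset.forall_mem_insert x G (C.Isolated v')).mpr
    ⟨fun q hq h => by_contra (hx' q hq · h), fun y hy q hq h => ?_⟩⟩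
  obtain ⟨hyP, hyD⟩ := Finset.mem_sdiff.mp (hGP hy)
  have hyx : y ≠ x := ne_of_mem_of_not_mem hy hxG
  have hy' := C.assign_update_of_notMem v u hyD hyx
  have hqx : q ≠ x := by
    rintro rfl
    exact hx' y hyP hyx h.symm
  rcases hchange q hqx with h' | h'
  · exact hG y hy q hq (by rwa [value, value, h', hy'] at h)
  · have hsize := value_size v' h
    rw [hy'] at hsize
    exact absurd (hbound y hyP) (by omega)

/-- `x` gets a term of its sort not yet taken, which exists by the cardinality bound; only nodes
of larger `sortKey` change. -/
lemma exists_update_isolated_of_finite (hS : S.WellDefined)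
    (hcard : ((C.P.filter fun p => p.2 = x.2).card : Cardinal) ≤ Cardinal.mk (S.Term x.2))
    (hx : x ∈ C.P \ C.D) (hfin : S.sortKey x.2 ≠ ⊤) {G : Finset (ℤ × Fin S.numSorts)}
    (hGP : G ⊆ C.P \ C.D) (hxG : x ∉ G) (hGkey : ∀ y ∈ G, S.sortKey y.2 ≤ S.sortKey x.2)
    (hG : ∀ y ∈ G, C.Isolated v y) : ∃ v', ∀ y ∈ insert x G, C.Isolated v' y := by
  classical
  obtain ⟨hxP, hxD⟩ := Finset.mem_sdiff.mp hx
  have hmem (q) (hq : q ∈ C.P) (hqx : q.2 = x.2) : q ∈ C.P.filter fun p => p.2 = x.2 :=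
    Finset.mem_filter.mpr ⟨hq, hqx⟩
  set others := (C.P.filter fun p => p.2 = x.2).erase x
  obtain ⟨u, hu⟩ := Sigma.exists_mk_notMem x.2 (others.image (C.value v)) <| by
    calc ((others.image (C.value v)).card : Cardinal) ≤ others.card := by
          exact_mod_cast Finset.card_image_le
      _ < (C.P.filter fun p => p.2 = x.2).card := by
          exact_mod_cast Finset.card_erase_lt_of_mem (hmem x hxP rfl)
      _ ≤ _ := hcard
  have hfresh (q) (hq : q ∈ C.P) (hqx : q ≠ x) : C.value v q ≠ ⟨x.2, u⟩ := fun h =>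
    hu <| Finset.mem_image.mpr
      ⟨q, Finset.mem_erase.mpr ⟨hqx, hmem q hq (congrArg Sigma.fst h)⟩, h⟩
  set v' := Function.update v x u
  have hsame (q) (hqx : q ≠ x) (hq : S.sortKey q.2 ≤ S.sortKey x.2) :
      C.value v' q = C.value v q := by
    rw [value, value, C.assign_update_of_sortKey_le v u hS hfin q hqx hq]
  have hvx : C.value v' x = ⟨x.2, u⟩ := by rw [value, assign_update_self v u hxD]
  refine ⟨v', (Finset.forall_mem_insert x G (C.Isolated v')).mpr
    ⟨fun q hq h => by_contra fun hqx => hfresh q hq hqx ?_, fun y hy q hq h => ?_⟩⟩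
  · rw [← hsame q hqx (value_sort v' h ▸ le_rfl), h, hvx]
  · obtain ⟨hyP, -⟩ := Finset.mem_sdiff.mp (hGP hy)
    have hyx : y ≠ x := ne_of_mem_of_not_mem hy hxG
    have hy' := hsame y hyx (hGkey y hy)
    rcases eq_or_ne q x with rfl | hqx
    · exact (hfresh y hyP hyx (by rw [← hy', ← h, hvx])).elim
    · exact hG y hy q hq (by rw [← hsame q hqx (value_sort v' h ▸ hGkey y hy), ← hy', h])

end Update

variable (C) in
lemma exists_isolated (hS : S.WellDefined) (hcard : ∀ σ : Fin S.numSorts,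
      ((C.P.filter fun p => p.2 = σ).card : Cardinal) ≤ Cardinal.mk (S.Term σ)) :
    ∃ v, ∀ y ∈ C.P \ C.D, C.Isolated v y := by
  classical
  refine Finset.induction_on_max_value (fun y => S.sortKey y.2)
    (motive := fun G => G ⊆ C.P \ C.D → ∃ v, ∀ y ∈ G, C.Isolated v y) (C.P \ C.D)
    (fun _ => ⟨fun p => Classical.choice (hS p.2), by simp⟩)
    (fun x G hxG hkey ih hGP => ?_) subset_rfl
  have hx := hGP (Finset.mem_insert_self x G)
  have hGP' := (Finset.subset_insert x G).trans hGP
  obtain ⟨v, hv⟩ := ih hGP'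
  by_cases hfin : S.sortKey x.2 = ⊤
  · have : Infinite (S.Term x.2) :=
      not_finite_iff_infinite.mp fun h => sortKey_ne_top_iff.mpr h hfin
    exact C.exists_update_isolated_of_infinite v (Finset.mem_sdiff.mp hx).2 hGP' hxG hv
  · exact C.exists_update_isolated_of_finite v hS (hcard x.2) hx hfin hGP' hxG hkey hv

end TermDag

end ADTSig

open ADTSig in
theorem model_construction_general (S : ADTSig) (hS : S.WellDefined)
    (P : Finset (ℤ × Fin S.numSorts))
    (hcard : ∀ σ : Fin S.numSorts,
       ((P.filter (fun p => p.2 = σ)).card : Cardinal) ≤ Cardinal.mk (S.Term σ))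
    (D : Finset (ℤ × Fin S.numSorts))
    (depF : ℤ × Fin S.numSorts → Fin S.numCtors)
    (depC : ℤ × Fin S.numSorts → ℕ → ℤ)
    (hdep : ∀ p ∈ D, S.ctorRes (depF p) = p.2 ∧
       ∀ j : Fin (S.ctorArgs (depF p)).length,
         (depC p j.val, (S.ctorArgs (depF p)).get j) ∈ P)
    (hinj : ∀ p ∈ D, ∀ q ∈ D, depF p = depF q →
       (∀ j < (S.ctorArgs (depF p)).length, depC p j = depC q j) → p = q)
    (depth : ℤ × Fin S.numSorts → ℤ)
    (hdepth : ∀ p ∈ D, ∀ j : Fin (S.ctorArgs (depF p)).length,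
       depth (depC p j.val, (S.ctorArgs (depF p)).get j) < depth p) :
    ∃ γ : (p : ℤ × Fin S.numSorts) → S.Term p.2,
      (∀ p ∈ P, ∀ q ∈ P, (⟨p.2, γ p⟩ : Σ σ, S.Term σ) = ⟨q.2, γ q⟩ → p = q) ∧
      ∀ p ∈ D, ∃ h : S.ctorRes (depF p) = p.2,
        γ p = cast (congrArg S.Term h)
          (Term.mk (depF p)
            (fun j => γ (depC p j.val, (S.ctorArgs (depF p)).get j))) := by
  obtain ⟨v, hv⟩ := TermDag.exists_isolated
    ⟨P, D, depF, depC, depth, fun p hp => (hdep p hp).1, fun p hp => (hdep p hp).2, hinj, hdepth⟩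
    hS hcard
  exact ⟨_, TermDag.value_injOn_of_isolated v hv,
    fun p hp => ⟨(hdep p hp).1, TermDag.assign_of_mem v hp⟩⟩

open ADTSig in
/-- The model-construction core of the completeness direction of the reduction
theorem: given a finite set `P` of (integer index, sort) pairs, a subset `D`
whose elements are assigned a constructor `depF p` and integer children
`depC p 0, depC p 1, …` (of the argument sorts, all in `P`), such that
(i) distinct elements of `D` with the same constructor have different child
tuples, and (ii) there is a `depth` function decreasing from every element of
`D` to its children, and such that for every sort the number of pairs of that
sort in `P` is at most `|𝕋_σ|`, there is an injective map `γ` of `P` into the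
constructor terms, mapping each pair to a term of its sort and respecting the
constructor/children structure on `D`. -/
theorem model_construction (S : ADTSig) (hS : S.WellDefined)
    (P : Finset (ℤ × Fin S.numSorts))
    (hdistinct : ∀ p ∈ P, ∀ q ∈ P, p.2 = q.2 → p.1 = q.1 → p = q)
    (hcard : ∀ σ : Fin S.numSorts,
       ((P.filter (fun p => p.2 = σ)).card : Cardinal) ≤ Cardinal.mk (S.Term σ))
    (D : Finset (ℤ × Fin S.numSorts)) (hD : D ⊆ P)
    (depF : ℤ × Fin S.numSorts → Fin S.numCtors)
    (depC : ℤ × Fin S.numSorts → ℕ → ℤ)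
    (hdep : ∀ p ∈ D, S.ctorRes (depF p) = p.2 ∧
       ∀ j : Fin (S.ctorArgs (depF p)).length,
         (depC p j.val, (S.ctorArgs (depF p)).get j) ∈ P)
    (hinj : ∀ p ∈ D, ∀ q ∈ D, depF p = depF q →
       (∀ j < (S.ctorArgs (depF p)).length, depC p j = depC q j) → p = q)
    (depth : ℤ × Fin S.numSorts → ℤ)
    (hdepth : ∀ p ∈ D, ∀ j : Fin (S.ctorArgs (depF p)).length,
       depth (depC p j.val, (S.ctorArgs (depF p)).get j) < depth p) :
    ∃ γ : (p : ℤ × Fin S.numSorts) → S.Term p.2,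
      (∀ p ∈ P, ∀ q ∈ P, (⟨p.2, γ p⟩ : Σ σ, S.Term σ) = ⟨q.2, γ q⟩ → p = q) ∧
      ∀ p ∈ D, ∃ h : S.ctorRes (depF p) = p.2,
        γ p = cast (congrArg S.Term h)
          (Term.mk (depF p)
            (fun j => γ (depC p j.val, (S.ctorArgs (depF p)).get j))) :=
  model_construction_general S hS P hcard D depF depC hdep hinj depth hdepth
end
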